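/- arXiv:0805.3082 — 3 statements merged into one kernel-verified Lean document; each statement's English description precedes it below -/
import Mathlib

section
/- If $(\Omega,\mathcal{F},P,T)$ is a measure-preserving ergodic system and $g, g_0, g_1, g_2, \ldots$ are integrable random variables with $g_t \to g$ in $L^1(P)$, then the Cesàro averages $\frac{1}{n}\sum_{t=0}^{n-1} g_t \circ T^t$ converge to $E\{g\}$ in $L^1(P)$ as $n \to \infty$. -/
open MeasureTheory Filter Finset Function
open scoped Topology ENNReal

/-!
Replacing `gₜ` by `g` changes the `t`-th term of the average by `(gₜ - g) ∘ Tᵗ`, whose `L¹` norm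
is `∫ |gₜ - g|` because `T` preserves `μ`; so the error is at most the Cesàro mean of
`∫ |gₜ - g|`, which tends to `0`. What remains is the `L¹` mean ergodic theorem for `g`. For
`g ∈ L²` it is von Neumann's theorem: the Birkhoff averages of the Koopman operator converge in
`L²` to an invariant function, which is constant by ergodicity, and the constant is `∫ g` since
averaging along `T` preserves integrals. A general `g ∈ L¹` is approximated by simple functions,
and the Birkhoff averages are `L¹` contractions.
-/

theorem birkhoffAverage_real_apply {α : Type*} (f : α → α) (g : α → ℝ) (n : ℕ) (x : α) :
    birkhoffAverage ℝ f g n x = 1 / (n : ℝ) * ∑ t ∈ range n, g (f^[t] x) := by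
  rw [birkhoffAverage, birkhoffSum, smul_eq_mul, one_div]

section

variable {Ω : Type*} [MeasurableSpace Ω] {μ : Measure Ω} {T : Ω → Ω}

namespace MeasureTheory

theorem MeasurePreserving.integral_comp_of_aestronglyMeasurable {α : Type*} [MeasurableSpace α]
    {ν : Measure α} {E : Type*} [NormedAddCommGroup E] [NormedSpace ℝ E] {f : Ω → α}
    (hf : MeasurePreserving f μ ν) {u : α → E} (hu : AEStronglyMeasurable u ν) :
    ∫ ω, u (f ω) ∂μ = ∫ x, u x ∂ν := by
  rw [← hf.map_eq] at hu ⊢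
  exact (integral_map hf.aemeasurable hu).symm

theorem MeasurePreserving.integrable_birkhoffAverage {E : Type*} [NormedAddCommGroup E]
    [NormedSpace ℝ E] (hT : MeasurePreserving T μ μ) {g : Ω → E} (hg : Integrable g μ) (n : ℕ) :
    Integrable (birkhoffAverage ℝ T g n) μ :=
  (integrable_finsetSum _ fun t _ => (hT.iterate t).integrable_comp_of_integrable hg).smul _

theorem MeasurePreserving.integral_birkhoffAverage {E : Type*} [NormedAddCommGroup E]
    [NormedSpace ℝ E] (hT : MeasurePreserving T μ μ) {g : Ω → E} (hg : Integrable g μ) {n : ℕ}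
    (hn : n ≠ 0) : ∫ ω, birkhoffAverage ℝ T g n ω ∂μ = ∫ ω, g ω ∂μ := by
  simp only [birkhoffAverage, birkhoffSum]
  rw [integral_smul, integral_finsetSum _ fun t _ => by
      exact (hT.iterate t).integrable_comp_of_integrable hg,
    sum_congr rfl fun t _ => (hT.iterate t).integral_comp_of_aestronglyMeasurable hg.1,
    sum_const, card_range, ← Nat.cast_smul_eq_nsmul ℝ, inv_smul_smul₀ (Nat.cast_ne_zero.2 hn)]

theorem MeasurePreserving.integral_abs_average_comp_iterate_le (hT : MeasurePreserving T μ μ)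
    {u : ℕ → Ω → ℝ} (hu : ∀ t, Integrable (u t) μ) (n : ℕ) :
    ∫ ω, |(1 / (n : ℝ)) * ∑ t ∈ range n, u t (T^[t] ω)| ∂μ ≤
      (1 / (n : ℝ)) * ∑ t ∈ range n, ∫ ω, |u t ω| ∂μ := by
  have hint t : Integrable (fun ω => u t (T^[t] ω)) μ :=
    (hT.iterate t).integrable_comp_of_integrable (hu t)
  calc _ ≤ ∫ ω, (1 / (n : ℝ)) * ∑ t ∈ range n, |u t (T^[t] ω)| ∂μ := by
        refine integral_mono ((integrable_finsetSum _ fun t _ => hint t).const_mul _).abs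
          ((integrable_finsetSum _ fun t _ => (hint t).abs).const_mul _) fun ω => ?_
        rw [abs_mul, abs_of_nonneg (by positivity)]
        gcongr
        exact abs_sum_le_sum_abs _ _
    _ = _ := by
        rw [integral_const_mul, integral_finsetSum _ fun t _ => (hint t).abs]
        congr 1
        exact sum_congr rfl fun t _ =>
          (hT.iterate t).integral_comp_of_aestronglyMeasurable (hu t).abs.aestronglyMeasurable

theorem MeasurePreserving.integral_abs_average_comp_iterate_sub_le [IsProbabilityMeasure μ]
    (hT : MeasurePreserving T μ μ) {u v : ℕ → Ω → ℝ} (hu : ∀ t, Integrable (u t) μ)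
    (hv : ∀ t, Integrable (v t) μ) (c d : ℝ) (n : ℕ) :
    ∫ ω, |(1 / (n : ℝ)) * ∑ t ∈ range n, u t (T^[t] ω) - c| ∂μ ≤
      (1 / (n : ℝ)) * ∑ t ∈ range n, ∫ ω, |u t ω - v t ω| ∂μ +
        ∫ ω, |(1 / (n : ℝ)) * ∑ t ∈ range n, v t (T^[t] ω) - d| ∂μ + |d - c| := by
  have integrable_avg {w : ℕ → Ω → ℝ} (hw : ∀ t, Integrable (w t) μ) :
      Integrable (fun ω => (1 / (n : ℝ)) * ∑ t ∈ range n, w t (T^[t] ω)) μ :=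
    (integrable_finsetSum _ fun t _ =>
      (hT.iterate t).integrable_comp_of_integrable (hw t)).const_mul _
  have huv t : Integrable (fun ω => u t ω - v t ω) μ := (hu t).sub (hv t)
  have huvA : Integrable
      (fun ω => |(1 / (n : ℝ)) * ∑ t ∈ range n, (u t (T^[t] ω) - v t (T^[t] ω))|) μ :=
    (integrable_avg huv).abs
  have hvd : Integrable (fun ω => (1 / (n : ℝ)) * ∑ t ∈ range n, v t (T^[t] ω) - d) μ :=
    (integrable_avg hv).sub (integrable_const d)
  calc _ ≤ ∫ ω, (|(1 / (n : ℝ)) * ∑ t ∈ range n, (u t (T^[t] ω) - v t (T^[t] ω))| +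
          |(1 / (n : ℝ)) * ∑ t ∈ range n, v t (T^[t] ω) - d| + |d - c|) ∂μ := by
        refine integral_mono ((integrable_avg hu).sub (integrable_const c)).abs
          ((huvA.add hvd.abs).add (integrable_const _)) fun ω => ?_
        have hsplit : (1 / (n : ℝ)) * ∑ t ∈ range n, u t (T^[t] ω) - c =
            (1 / (n : ℝ)) * ∑ t ∈ range n, (u t (T^[t] ω) - v t (T^[t] ω)) +
              ((1 / (n : ℝ)) * ∑ t ∈ range n, v t (T^[t] ω) - d) + (d - c) := by
          rw [sum_sub_distrib]; ring
        rw [hsplit]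
        exact (abs_add_le _ _).trans (add_le_add_left (abs_add_le _ _) _)
    _ ≤ _ := by
        rw [integral_add (by exact huvA.add hvd.abs) (integrable_const _),
          integral_add huvA hvd.abs, integral_const, probReal_univ, one_smul]
        gcongr
        exact hT.integral_abs_average_comp_iterate_le huv n

theorem Integrable.exists_memLp_integral_abs_sub_lt [IsFiniteMeasure μ] {g : Ω → ℝ}
    (hg : Integrable g μ) (p : ℝ≥0∞) {ε : ℝ} (hε : 0 < ε) :
    ∃ h : Ω → ℝ, MemLp h p μ ∧ ∫ ω, |g ω - h ω| ∂μ < ε := by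
  obtain ⟨φ, hφ, -⟩ := (memLp_one_iff_integrable.2 hg).exists_simpleFunc_eLpNorm_sub_lt
    ENNReal.one_ne_top (ENNReal.ofReal_pos.2 hε).ne'
  refine ⟨φ, φ.memLp_of_isFiniteMeasure p μ, ?_⟩
  have hφm : AEStronglyMeasurable (g - ⇑φ) μ := hg.1.sub φ.aestronglyMeasurable
  change ∫ ω, ‖(g - ⇑φ) ω‖ ∂μ < ε
  rw [integral_norm_eq_lintegral_enorm hφm, ← eLpNorm_one_eq_lintegral_enorm]
  exact ENNReal.toReal_lt_of_lt_ofReal hφ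

namespace Lp

variable {E : Type*} [NormedAddCommGroup E] {p : ℝ≥0∞}

theorem coeFn_birkhoffSum_compMeasurePreserving (hT : MeasurePreserving T μ μ) (f : Lp E p μ)
    (n : ℕ) : ⇑(birkhoffSum (compMeasurePreserving T hT) id n f) =ᵐ[μ] birkhoffSum T f n := by
  induction n with
  | zero => simpa using coeFn_zero E p μ
  | succ n ih =>
    rw [funext (birkhoffSum_succ T f n), birkhoffSum_succ, id, compMeasurePreserving_iterate]
    filter_upwards [coeFn_add (birkhoffSum (compMeasurePreserving T hT) id n f)
      (compMeasurePreserving T^[n] (hT.iterate n) f), ih,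
      coeFn_compMeasurePreserving f (hT.iterate n)]
      with ω h_add h_ih h_comp
    rw [h_add, Pi.add_apply, h_ih, h_comp, comp_apply]

theorem coeFn_birkhoffAverage_compMeasurePreserving [NormedSpace ℝ E]
    (hT : MeasurePreserving T μ μ) (f : Lp E p μ) (n : ℕ) :
    ⇑(birkhoffAverage ℝ (compMeasurePreserving T hT) id n f) =ᵐ[μ] birkhoffAverage ℝ T f n :=
  (coeFn_smul _ _).trans ((coeFn_birkhoffSum_compMeasurePreserving hT f n).const_smul _)

theorem integral_norm_le_norm [IsProbabilityMeasure μ] [Fact (1 ≤ p)] (f : Lp E p μ) :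
    ∫ ω, ‖f ω‖ ∂μ ≤ ‖f‖ := by
  rw [integral_norm_eq_lintegral_enorm (Lp.aestronglyMeasurable f),
    ← eLpNorm_one_eq_lintegral_enorm, Lp.norm_def]
  exact ENNReal.toReal_mono (Lp.eLpNorm_ne_top f)
    (eLpNorm_le_eLpNorm_of_exponent_le Fact.out (Lp.aestronglyMeasurable f))

end Lp

end MeasureTheory

namespace Ergodic

theorem exists_tendsto_birkhoffAverage_compMeasurePreserving {E : Type*}
    [NormedAddCommGroup E] [InnerProductSpace ℝ E] [CompleteSpace E] [IsFiniteMeasure μ]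
    (hT : Ergodic T μ) (f : Lp E 2 μ) :
    ∃ c : E, Tendsto (birkhoffAverage ℝ (Lp.compMeasurePreserving T hT.toMeasurePreserving) id · f)
      atTop (𝓝 (Lp.const 2 μ c)) := by
  set U := (Lp.compMeasurePreservingₗᵢ ℝ T hT.toMeasurePreserving
    (E := E) (p := 2)).toContinuousLinearMap
  obtain ⟨L, hL, h_lim⟩ : ∃ L, U L = L ∧ Tendsto (birkhoffAverage ℝ U id · f) atTop (𝓝 L) :=
    ⟨_, by
      have h := ((U.eqLocus (1 : Lp E 2 μ →L[ℝ] Lp E 2 μ)).orthogonalProjectionOnto f).2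
      rw [LinearMap.mem_eqLocus] at h
      simpa using h,
      U.tendsto_birkhoffAverage_orthogonalProjection
        (LinearIsometry.norm_toContinuousLinearMap_le _) f⟩
  obtain ⟨c, hc⟩ := hT.eq_const_of_compMeasurePreserving_eq (g := (L : Ω →ₘ[μ] E))
    (by rw [← Lp.compMeasurePreserving_val]; exact congrArg Subtype.val hL)
  have hLc : L = Lp.const 2 μ c := Subtype.ext hc
  exact ⟨c, hLc ▸ h_lim⟩

variable [IsProbabilityMeasure μ]

theorem tendsto_integral_abs_birkhoffAverage_sub_of_memLp (hT : Ergodic T μ)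
    {h : Ω → ℝ} (hh : MemLp h 2 μ) :
    Tendsto (fun n : ℕ => ∫ ω, |birkhoffAverage ℝ T h n ω - ∫ x, h x ∂μ| ∂μ) atTop (𝓝 0) := by
  obtain ⟨c, hc⟩ := hT.exists_tendsto_birkhoffAverage_compMeasurePreserving (hh.toLp h)
  have h_coe (n : ℕ) : ⇑(birkhoffAverage ℝ (Lp.compMeasurePreserving T hT.toMeasurePreserving) id n
      (hh.toLp h) - Lp.const 2 μ c) =ᵐ[μ] fun ω => birkhoffAverage ℝ T h n ω - c := by
    filter_upwards [Lp.coeFn_sub (birkhoffAverage ℝ (Lp.compMeasurePreserving T _) id n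
        (hh.toLp h)) (Lp.const 2 μ c),
      Lp.coeFn_birkhoffAverage_compMeasurePreserving hT.toMeasurePreserving (hh.toLp h) n,
      hT.quasiMeasurePreserving.birkhoffAverage_ae_eq_of_ae_eq ℝ hh.coeFn_toLp n,
      Lp.coeFn_const 2 μ c] with ω h_sub h_avg h_toLp h_const
    rw [h_sub, Pi.sub_apply, h_avg, h_toLp, h_const, const_apply]
  have h_lim : Tendsto (fun n : ℕ => ∫ ω, |birkhoffAverage ℝ T h n ω - c| ∂μ) atTop (𝓝 0) := by
    refine squeeze_zero (fun n => integral_nonneg fun _ => abs_nonneg _) (fun n => ?_)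
      (tendsto_iff_norm_sub_tendsto_zero.1 hc)
    exact (integral_congr_ae ((h_coe n).fun_comp norm)).symm.trans_le
      (Lp.integral_norm_le_norm _)
  suffices hc_eq : ∫ x, h x ∂μ = c by rwa [hc_eq]
  have hh1 := hh.integrable one_le_two
  have h_le : ∀ᶠ n : ℕ in atTop, |∫ x, h x ∂μ - c| ≤ ∫ ω, |birkhoffAverage ℝ T h n ω - c| ∂μ := by
    filter_upwards [eventually_ne_atTop 0] with n hn
    have h_avg := abs_integral_le_integral_abs (μ := μ)
      (f := fun ω => birkhoffAverage ℝ T h n ω - c)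
    rwa [integral_sub (hT.toMeasurePreserving.integrable_birkhoffAverage hh1 n)
      (integrable_const c), integral_const, probReal_univ, one_smul,
      hT.toMeasurePreserving.integral_birkhoffAverage hh1 hn] at h_avg
  exact sub_eq_zero.1 (abs_nonpos_iff.1 (ge_of_tendsto h_lim h_le))

theorem tendsto_integral_abs_birkhoffAverage_sub (hT : Ergodic T μ) {g : Ω → ℝ}
    (hg : Integrable g μ) :
    Tendsto (fun n : ℕ => ∫ ω, |birkhoffAverage ℝ T g n ω - ∫ x, g x ∂μ| ∂μ) atTop (𝓝 0) := by
  rw [Metric.tendsto_atTop]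
  intro ε hε
  obtain ⟨h, hh, hgh⟩ := hg.exists_memLp_integral_abs_sub_lt 2 (by positivity : 0 < ε / 3)
  have hh1 := hh.integrable one_le_two
  obtain ⟨N, hN⟩ := Metric.tendsto_atTop.1
    (hT.tendsto_integral_abs_birkhoffAverage_sub_of_memLp hh) (ε / 3) (by positivity)
  refine ⟨max N 1, fun n hn => ?_⟩
  have h_avg : 1 / (n : ℝ) * ∑ _t ∈ range n, ∫ ω, |g ω - h ω| ∂μ = ∫ ω, |g ω - h ω| ∂μ := by
    have hn0 : (n : ℝ) ≠ 0 := Nat.cast_ne_zero.2 (by omega)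
    rw [sum_const, card_range, nsmul_eq_mul]
    field_simp
  have h_int : |∫ x, h x ∂μ - ∫ x, g x ∂μ| ≤ ∫ ω, |g ω - h ω| ∂μ := by
    rw [abs_sub_comm, ← integral_sub hg hh1]
    exact abs_integral_le_integral_abs
  have key := hT.toMeasurePreserving.integral_abs_average_comp_iterate_sub_le
    (fun _ => hg) (fun _ => hh1) (∫ x, g x ∂μ) (∫ x, h x ∂μ) n
  simp only [← birkhoffAverage_real_apply, h_avg] at key
  have hNn := hN n (le_of_max_le_left hn)
  rw [Real.dist_eq, sub_zero, abs_of_nonneg (integral_nonneg fun _ => abs_nonneg _)] at hNn ⊢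
  linarith

end Ergodic

end

/-- Generalized mean ergodic theorem: if `gₜ → g` in `L¹(μ)` and `T` is ergodic,
then the Cesàro averages `(1/n) ∑_{t<n} gₜ ∘ T^t` converge to `∫ g` in `L¹(μ)`. -/
theorem stmt_0 {Ω : Type*} [MeasurableSpace Ω] (μ : Measure Ω) [IsProbabilityMeasure μ]
    (T : Ω → Ω) (hT : Ergodic T μ)
    (g : Ω → ℝ) (gs : ℕ → Ω → ℝ)
    (hg : Integrable g μ) (hgs : ∀ t, Integrable (gs t) μ)
    (hconv : Tendsto (fun t => ∫ ω, |gs t ω - g ω| ∂μ) atTop (nhds 0)) :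
    Tendsto (fun n : ℕ => ∫ ω,
        |(1 / (n : ℝ)) * ∑ t ∈ Finset.range n, gs t (T^[t] ω) - ∫ x, g x ∂μ| ∂μ)
      atTop (nhds 0) := by
  have h_cesaro : Tendsto (fun n : ℕ => 1 / (n : ℝ) * ∑ t ∈ range n, ∫ ω, |gs t ω - g ω| ∂μ)
      atTop (𝓝 0) := by
    simpa only [one_div] using hconv.cesaro
  have h_ergodic : Tendsto (fun n : ℕ =>
      ∫ ω, |1 / (n : ℝ) * ∑ t ∈ range n, g (T^[t] ω) - ∫ x, g x ∂μ| ∂μ) atTop (𝓝 0) := by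
    simpa only [birkhoffAverage_real_apply] using hT.tendsto_integral_abs_birkhoffAverage_sub hg
  refine squeeze_zero (fun n => integral_nonneg fun _ => abs_nonneg _)
    (fun n => hT.toMeasurePreserving.integral_abs_average_comp_iterate_sub_le hgs (fun _ => hg)
      (∫ x, g x ∂μ) (∫ x, g x ∂μ) n) ?_
  simpa only [sub_self, abs_zero, add_zero, zero_add] using h_cesaro.add h_ergodic
end

section
/- Let $\{X_t\}$ be a stationary ergodic process with values in a finite set $\mathcal{X}$ and entropy rate $H$. Let $\Delta_k$ be any sequence of real numbers with $\sum_k 2^{-\Delta_k} < \infty$, and let $J_k > 0$ be arbitrary positive integers. Then almost surely, $\log(\tau^k_{J_k}/J_k) \le -\log P(X^{-k}) + \Delta_k$ eventually for all large $k$. -/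
open MeasureTheory Filter Finset

namespace Stmt3

variable {𝒳 : Type*}

/-- The left shift on two-sided sequences. -/
def shift (ω : ℤ → 𝒳) : ℤ → 𝒳 := fun n => ω (n + 1)

/-- The block `(X_{-k-t}, …, X_{-1-t})` of length `k`, `t` steps in the past. -/
def pastBlk (k t : ℕ) (ω : ℤ → 𝒳) : Fin k → 𝒳 := fun i => ω (-(k : ℤ) + i - t)

/-- Successive recurrence times of the block `X^{-k} = (X_{-k},…,X_{-1})`. -/
noncomputable def recTime [DecidableEq 𝒳] (k : ℕ) : ℕ → (ℤ → 𝒳) → ℕ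
  | 0, _ => 0
  | j + 1, ω => sInf {t | recTime k j ω < t ∧ pastBlk k t ω = pastBlk k 0 ω}

end Stmt3

open Stmt3

namespace Stmt3Proof

open scoped ENNReal
set_option linter.unusedSectionVars false

variable {𝒳 : Type*} [Fintype 𝒳] [DecidableEq 𝒳] [MeasurableSpace 𝒳]
    [MeasurableSingletonClass 𝒳]

def T (ω : ℤ → 𝒳) : ℤ → 𝒳 := fun n => ω (n - 1)

lemma measurable_T : Measurable (T (𝒳 := 𝒳)) :=
  measurable_pi_lambda _ fun _ => measurable_pi_apply _

lemma measurable_shift : Measurable (shift (𝒳 := 𝒳)) :=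
  measurable_pi_lambda _ fun _ => measurable_pi_apply _

lemma measurePreserving_T {μ : Measure (ℤ → 𝒳)} (h : MeasurePreserving shift μ μ) :
    MeasurePreserving T μ μ := by
  refine ⟨measurable_T, ?_⟩
  have h2 : (μ.map shift).map T = μ.map T := by rw [h.map_eq]
  rw [Measure.map_map measurable_T measurable_shift] at h2
  have h3 : T ∘ shift = (id : (ℤ → 𝒳) → ℤ → 𝒳) := by
    funext ω n
    show ω (n - 1 + 1) = ω n
    congr 1; ring
  rw [h3, Measure.map_id] at h2
  exact h2.symm

lemma pastBlk_T (k s : ℕ) (ω : ℤ → 𝒳) : pastBlk k s (T ω) = pastBlk k (s + 1) ω := by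
  funext i
  show ω (-(k:ℤ) + i - s - 1) = ω (-(k:ℤ) + i - ((s:ℕ)+1 : ℕ))
  congr 1; push_cast; ring

def V (k : ℕ) (b : Fin k → 𝒳) (s : ℕ) : Set (ℤ → 𝒳) := {ω | pastBlk k s ω = b}

lemma measurable_pastBlk (k s : ℕ) : Measurable (pastBlk (𝒳 := 𝒳) k s) :=
  measurable_pi_lambda _ fun _ => measurable_pi_apply _

lemma measurableSet_V (k : ℕ) (b : Fin k → 𝒳) (s : ℕ) : MeasurableSet (V k b s) :=
  measurable_pastBlk k s (MeasurableSet.singleton b)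

def cnt (k : ℕ) (b : Fin k → 𝒳) (F : Finset ℕ) (ω : ℤ → 𝒳) : ℕ :=
  (F.filter fun s => pastBlk k s ω = b).card

lemma measurable_cnt (k : ℕ) (b : Fin k → 𝒳) (F : Finset ℕ) :
    Measurable (cnt k b F) := by
  have h : cnt k b F = fun ω => ∑ s ∈ F, if pastBlk k s ω = b then 1 else 0 := by
    funext ω; exact Finset.card_filter _ F
  rw [h]
  exact Finset.measurable_sum F fun s _ =>
    Measurable.ite (measurableSet_V k b s) measurable_const measurable_const

lemma measurableSet_cnt_le (k : ℕ) (b : Fin k → 𝒳) (F : Finset ℕ) (j : ℕ) :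
    MeasurableSet {ω : ℤ → 𝒳 | cnt k b F ω ≤ j} :=
  measurable_cnt k b F (Set.to_countable (Set.Iic j)).measurableSet


def Aset (k : ℕ) (b : Fin k → 𝒳) (j t : ℕ) : Set (ℤ → 𝒳) :=
  {ω | cnt k b (range t) ω ≤ j}

def Bset (k : ℕ) (b : Fin k → 𝒳) (j t : ℕ) : Set (ℤ → 𝒳) :=
  {ω | cnt k b (Icc 1 t) ω ≤ j} ∩ V k b 0

lemma range_succ_insert (t : ℕ) : range (t + 1) = insert 0 (Icc 1 t) := by
  ext s; simp only [mem_range, mem_insert, mem_Icc]; omega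

lemma cnt_succ_of_mem {k : ℕ} {b : Fin k → 𝒳} {ω : ℤ → 𝒳} (hω : ω ∈ V k b 0) (t : ℕ) :
    cnt k b (range (t + 1)) ω = cnt k b (Icc 1 t) ω + 1 := by
  have h0 : (0 : ℕ) ∉ Icc 1 t := by simp
  simp only [cnt, range_succ_insert, filter_insert]
  rw [if_pos (show pastBlk k 0 ω = b from hω),
    card_insert_of_notMem fun hc => h0 (mem_of_mem_filter _ hc)]

lemma cnt_succ_of_not_mem {k : ℕ} {b : Fin k → 𝒳} {ω : ℤ → 𝒳} (hω : ω ∉ V k b 0) (t : ℕ) :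
    cnt k b (range (t + 1)) ω = cnt k b (Icc 1 t) ω := by
  simp only [cnt, range_succ_insert, filter_insert]
  rw [if_neg (show ¬ pastBlk k 0 ω = b from hω)]

lemma cnt_T (k : ℕ) (b : Fin k → 𝒳) (t : ℕ) (ω : ℤ → 𝒳) :
    cnt k b (range t) (T ω) = cnt k b (Icc 1 t) ω := by
  unfold cnt
  simp only [pastBlk_T]
  apply Finset.card_bij (fun s _ => s + 1)
  · intro a ha
    simp only [mem_filter, mem_range] at ha
    simp only [mem_filter, mem_Icc]
    exact ⟨⟨by omega, by omega⟩, ha.2⟩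
  · intro a _ a' _ h; omega
  · intro c hc
    simp only [mem_filter, mem_Icc] at hc
    refine ⟨c - 1, ?_, by omega⟩
    simp only [mem_filter, mem_range]
    refine ⟨by omega, ?_⟩
    rw [show c - 1 + 1 = c from by omega]
    exact hc.2

variable (μ : Measure (ℤ → 𝒳))

lemma meas_Icc_eq (h : MeasurePreserving shift μ μ) (k : ℕ) (b : Fin k → 𝒳) (j t : ℕ) :
    μ {ω | cnt k b (Icc 1 t) ω ≤ j} = μ (Aset k b j t) := by
  have hT := measurePreserving_T h
  have hs : {ω : ℤ → 𝒳 | cnt k b (Icc 1 t) ω ≤ j} = T ⁻¹' (Aset k b j t) := by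
    ext ω
    simp only [Set.mem_setOf_eq, Set.mem_preimage, Aset, cnt_T]
  rw [hs]
  exact hT.measure_preimage (measurableSet_cnt_le k b (range t) j).nullMeasurableSet

lemma key_identity (h : MeasurePreserving shift μ μ) (k : ℕ) (b : Fin k → 𝒳) (j t : ℕ) :
    μ (Aset k b j t) + μ (Aset k b j (t+1) ∩ V k b 0) =
      μ (Bset k b j t) + μ (Aset k b j (t+1)) := by
  have e1 : μ (Aset k b j t) =
      μ (Bset k b j t) + μ ({ω | cnt k b (Icc 1 t) ω ≤ j} \ V k b 0) := by
    rw [← meas_Icc_eq μ h k b j t,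
      ← measure_inter_add_diff {ω | cnt k b (Icc 1 t) ω ≤ j} (measurableSet_V k b 0)]
    rfl
  have e2 : {ω : ℤ → 𝒳 | cnt k b (Icc 1 t) ω ≤ j} \ V k b 0 =
      Aset k b j (t+1) \ V k b 0 := by
    ext ω
    constructor
    · rintro ⟨h1, h2⟩
      exact ⟨by simpa [Aset, cnt_succ_of_not_mem h2] using h1, h2⟩
    · rintro ⟨h1, h2⟩
      have h1' : cnt k b (range (t+1)) ω ≤ j := h1
      rw [cnt_succ_of_not_mem h2] at h1'
      exact ⟨h1', h2⟩
  have e3 : μ (Aset k b j (t+1)) =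
      μ (Aset k b j (t+1) ∩ V k b 0) + μ (Aset k b j (t+1) \ V k b 0) :=
    (measure_inter_add_diff _ (measurableSet_V k b 0)).symm
  rw [e1, e2, e3]
  ring

lemma Cset_zero (k : ℕ) (b : Fin k → 𝒳) (t : ℕ) : Aset k b 0 (t+1) ∩ V k b 0 = ∅ := by
  ext ω
  simp only [Set.mem_inter_iff, Set.mem_empty_iff_false, iff_false, not_and]
  intro h1 h2
  have hc := cnt_succ_of_mem h2 t
  have h1' : cnt k b (range (t+1)) ω ≤ 0 := h1
  omega

lemma Cset_succ (k : ℕ) (b : Fin k → 𝒳) (j t : ℕ) :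
    Aset k b (j+1) (t+1) ∩ V k b 0 = Bset k b j t := by
  ext ω
  simp only [Bset, Aset, Set.mem_inter_iff, Set.mem_setOf_eq]
  constructor
  · rintro ⟨h1, h2⟩
    have hc := cnt_succ_of_mem h2 t
    exact ⟨by omega, h2⟩
  · rintro ⟨h1, h2⟩
    have hc := cnt_succ_of_mem h2 t
    exact ⟨by omega, h2⟩


lemma core (h : MeasurePreserving shift μ μ) [IsProbabilityMeasure μ]
    (k : ℕ) (b : Fin k → 𝒳) (j M : ℕ) :
    ∑ t ∈ range M, μ (Bset k b j t) ≤
      1 + ∑ t ∈ range M, μ (Aset k b j (t+1) ∩ V k b 0) := by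
  have hsum : ∑ t ∈ range M, μ (Aset k b j t) +
        ∑ t ∈ range M, μ (Aset k b j (t+1) ∩ V k b 0) =
      ∑ t ∈ range M, μ (Bset k b j t) + ∑ t ∈ range M, μ (Aset k b j (t+1)) := by
    rw [← Finset.sum_add_distrib, ← Finset.sum_add_distrib]
    exact Finset.sum_congr rfl fun t _ => key_identity μ h k b j t
  have htel : ∑ t ∈ range M, μ (Aset k b j t) + μ (Aset k b j M) =
      ∑ t ∈ range M, μ (Aset k b j (t+1)) + μ (Aset k b j 0) := by
    have h1 := Finset.sum_range_succ (fun t => μ (Aset k b j t)) M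
    have h2 := Finset.sum_range_succ' (fun t => μ (Aset k b j t)) M
    exact h1.symm.trans h2
  have hfin : ∑ t ∈ range M, μ (Aset k b j (t+1)) ≠ ⊤ :=
    (ENNReal.sum_lt_top.mpr fun t _ => measure_lt_top μ _).ne
  have step : ∑ t ∈ range M, μ (Bset k b j t) + ∑ t ∈ range M, μ (Aset k b j (t+1))
      ≤ (1 + ∑ t ∈ range M, μ (Aset k b j (t+1) ∩ V k b 0)) +
        ∑ t ∈ range M, μ (Aset k b j (t+1)) := by
    rw [← hsum]
    calc ∑ t ∈ range M, μ (Aset k b j t) + ∑ t ∈ range M, μ (Aset k b j (t+1) ∩ V k b 0)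
        ≤ (∑ t ∈ range M, μ (Aset k b j t) + μ (Aset k b j M)) +
            ∑ t ∈ range M, μ (Aset k b j (t+1) ∩ V k b 0) := by
          gcongr
          exact le_self_add
      _ = (∑ t ∈ range M, μ (Aset k b j (t+1)) + μ (Aset k b j 0)) +
            ∑ t ∈ range M, μ (Aset k b j (t+1) ∩ V k b 0) := by rw [htel]
      _ ≤ (∑ t ∈ range M, μ (Aset k b j (t+1)) + 1) +
            ∑ t ∈ range M, μ (Aset k b j (t+1) ∩ V k b 0) := by
          gcongr
          exact prob_le_one
      _ = (1 + ∑ t ∈ range M, μ (Aset k b j (t+1) ∩ V k b 0)) +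
            ∑ t ∈ range M, μ (Aset k b j (t+1)) := by ring
  exact (ENNReal.add_le_add_iff_right hfin).mp step

lemma sum_B_le (h : MeasurePreserving shift μ μ) [IsProbabilityMeasure μ]
    (k : ℕ) (b : Fin k → 𝒳) :
    ∀ j M : ℕ, ∑ t ∈ range M, μ (Bset k b j t) ≤ ((j : ℝ≥0∞) + 1) := by
  intro j
  induction j with
  | zero =>
    intro M
    refine le_trans (core μ h k b 0 M) ?_
    have : ∀ t ∈ range M, μ (Aset k b 0 (t+1) ∩ V k b 0) = 0 := by
      intro t _; rw [Cset_zero]; exact measure_empty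
    rw [Finset.sum_eq_zero this]
    simp
  | succ i ih =>
    intro M
    refine le_trans (core μ h k b (i+1) M) ?_
    have heq : ∀ t ∈ range M, μ (Aset k b (i+1) (t+1) ∩ V k b 0) = μ (Bset k b i t) := by
      intro t _; rw [Cset_succ]
    rw [Finset.sum_congr rfl heq]
    calc 1 + ∑ t ∈ range M, μ (Bset k b i t) ≤ 1 + ((i : ℝ≥0∞) + 1) := by
          gcongr
          exact ih M
      _ = ((i : ℝ≥0∞) + 1) + 1 := by ring
      _ = (((i+1 : ℕ) : ℝ≥0∞) + 1) := by push_cast; ring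

lemma B_antitone (k : ℕ) (b : Fin k → 𝒳) (j : ℕ) {t t' : ℕ} (h : t ≤ t') :
    Bset k b j t' ⊆ Bset k b j t := by
  rintro ω ⟨h1, h2⟩
  refine ⟨?_, h2⟩
  have hle : cnt k b (Icc 1 t) ω ≤ cnt k b (Icc 1 t') ω :=
    card_le_card (filter_subset_filter _ (Icc_subset_Icc_right h))
  exact le_trans hle h1

lemma B_le (h : MeasurePreserving shift μ μ) [IsProbabilityMeasure μ]
    (k : ℕ) (b : Fin k → 𝒳) (j C : ℕ) :
    μ (Bset k b j C) ≤ ((j : ℝ≥0∞) + 1) / ((C : ℝ≥0∞) + 1) := by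
  have hmul : μ (Bset k b j C) * ((C : ℝ≥0∞) + 1) ≤ (j : ℝ≥0∞) + 1 := by
    have hs : ∀ t ∈ range (C+1), μ (Bset k b j C) ≤ μ (Bset k b j t) := by
      intro t ht
      exact measure_mono (B_antitone k b j (by simp only [mem_range] at ht; omega))
    calc μ (Bset k b j C) * ((C : ℝ≥0∞) + 1)
        = ∑ _t ∈ range (C+1), μ (Bset k b j C) := by
          rw [Finset.sum_const, card_range, nsmul_eq_mul]
          push_cast; ring
      _ ≤ ∑ t ∈ range (C+1), μ (Bset k b j t) := Finset.sum_le_sum hs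
      _ ≤ (j : ℝ≥0∞) + 1 := sum_B_le μ h k b j (C+1)
  rw [ENNReal.le_div_iff_mul_le (Or.inl (by simp)) (Or.inl (by simp))]
  exact hmul

lemma cnt_recTime_le (k : ℕ) (ω : ℤ → 𝒳) :
    ∀ j, cnt k (pastBlk k 0 ω) (Icc 1 (recTime k j ω)) ω ≤ j := by
  intro j
  induction j with
  | zero => simp [recTime, cnt]
  | succ j ih =>
    have hdef : recTime k (j+1) ω =
        sInf {t | recTime k j ω < t ∧ pastBlk k t ω = pastBlk k 0 ω} := rfl
    by_cases hne : {t | recTime k j ω < t ∧ pastBlk k t ω = pastBlk k 0 ω}.Nonempty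
    · have hmem := Nat.sInf_mem hne
      rw [hdef]
      set r' := sInf {t | recTime k j ω < t ∧ pastBlk k t ω = pastBlk k 0 ω} with hr'
      obtain ⟨hlt, heq⟩ := hmem
      have hsub : (Icc 1 r').filter (fun s => pastBlk k s ω = pastBlk k 0 ω) ⊆
          insert r' ((Icc 1 (recTime k j ω)).filter
            (fun s => pastBlk k s ω = pastBlk k 0 ω)) := by
        intro s hs
        simp only [mem_filter, mem_Icc] at hs
        rcases eq_or_ne s r' with rfl | hsr
        · exact mem_insert_self _ _
        · apply mem_insert_of_mem
          simp only [mem_filter, mem_Icc]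
          refine ⟨⟨hs.1.1, ?_⟩, hs.2⟩
          by_contra hgt
          push_neg at hgt
          have : r' ≤ s := Nat.sInf_le ⟨hgt, hs.2⟩
          omega
      have h1 : cnt k (pastBlk k 0 ω) (Icc 1 r') ω ≤
          (insert r' ((Icc 1 (recTime k j ω)).filter
            (fun s => pastBlk k s ω = pastBlk k 0 ω))).card := card_le_card hsub
      have h2 := card_insert_le r' ((Icc 1 (recTime k j ω)).filter
            (fun s => pastBlk k s ω = pastBlk k 0 ω))
      have h3 := ih
      unfold cnt at h1 h3 ⊢
      omega
    · rw [hdef, Nat.sInf_eq_zero.mpr (Or.inr (Set.not_nonempty_iff_eq_empty.mp hne))]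
      simp [cnt]

lemma recTime_le_of_cnt (k : ℕ) (ω : ℤ → 𝒳) :
    ∀ j C : ℕ, j ≤ cnt k (pastBlk k 0 ω) (Icc 1 C) ω → recTime k j ω ≤ C := by
  intro j
  induction j with
  | zero => intro C _; simp [recTime]
  | succ j ih =>
    intro C hC
    have hK := cnt_recTime_le k ω j
    have hex : ∃ s ∈ (Icc 1 C).filter (fun s => pastBlk k s ω = pastBlk k 0 ω),
        recTime k j ω < s := by
      by_contra hno
      push_neg at hno
      have hsub : (Icc 1 C).filter (fun s => pastBlk k s ω = pastBlk k 0 ω) ⊆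
          (Icc 1 (recTime k j ω)).filter (fun s => pastBlk k s ω = pastBlk k 0 ω) := by
        intro s hs
        have hle := hno s hs
        simp only [mem_filter, mem_Icc] at hs ⊢
        exact ⟨⟨hs.1.1, hle⟩, hs.2⟩
      have hcard := card_le_card hsub
      unfold cnt at hC hK
      omega
    obtain ⟨s, hs, hrs⟩ := hex
    simp only [mem_filter, mem_Icc] at hs
    have hdef : recTime k (j+1) ω =
        sInf {t | recTime k j ω < t ∧ pastBlk k t ω = pastBlk k 0 ω} := rfl
    have hle : sInf {t | recTime k j ω < t ∧ pastBlk k t ω = pastBlk k 0 ω} ≤ s :=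
      Nat.sInf_le ⟨hrs, hs.2⟩
    rw [hdef]
    exact le_trans hle hs.1.2

lemma meas_bad_le (h : MeasurePreserving shift μ μ) [IsProbabilityMeasure μ]
    (k : ℕ) (b : Fin k → 𝒳) (Jk : ℕ) (hJk : 0 < Jk) (C : ℕ) :
    μ (V k b 0 ∩ {ω | C < recTime k Jk ω}) ≤ (Jk : ℝ≥0∞) / ((C : ℝ≥0∞) + 1) := by
  have hsub : V k b 0 ∩ {ω | C < recTime k Jk ω} ⊆ Bset k b (Jk - 1) C := by
    rintro ω ⟨h1, h2⟩
    have hb : pastBlk k 0 ω = b := h1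
    refine ⟨?_, h1⟩
    simp only [Set.mem_setOf_eq]
    by_contra hcnt
    push_neg at hcnt
    have hge : Jk ≤ cnt k (pastBlk k 0 ω) (Icc 1 C) ω := by rw [hb]; omega
    have := recTime_le_of_cnt k ω Jk C hge
    have h2' : C < recTime k Jk ω := h2
    omega
  calc μ (V k b 0 ∩ {ω | C < recTime k Jk ω}) ≤ μ (Bset k b (Jk-1) C) :=
        measure_mono hsub
    _ ≤ (((Jk - 1 : ℕ) : ℝ≥0∞) + 1) / ((C : ℝ≥0∞) + 1) := B_le μ h k b _ C
    _ = (Jk : ℝ≥0∞) / ((C : ℝ≥0∞) + 1) := by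
        congr 1
        rw [show ((Jk - 1 : ℕ) : ℝ≥0∞) + 1 = ((Jk - 1 + 1 : ℕ) : ℝ≥0∞) from by push_cast; ring]
        congr 1
        omega


lemma sum_V_eq_one [IsProbabilityMeasure μ] (k : ℕ) :
    ∑ b : Fin k → 𝒳, μ (V k b 0) = 1 := by
  have hdisj : Pairwise (Function.onFun Disjoint fun b : Fin k → 𝒳 => V k b 0) := by
    intro b b' hbb
    refine Set.disjoint_left.mpr ?_
    intro ω h1 h2
    exact hbb ((show pastBlk k 0 ω = b from h1).symm.trans h2)
  have hU := measure_iUnion (μ := μ) hdisj (fun b => measurableSet_V k b 0)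
  have huniv : (⋃ b : Fin k → 𝒳, V k b 0) = Set.univ := by
    ext ω
    simp only [Set.mem_iUnion, Set.mem_univ, iff_true]
    exact ⟨pastBlk k 0 ω, rfl⟩
  rw [huniv, measure_univ] at hU
  rw [tsum_fintype] at hU
  exact hU.symm

open Classical in
noncomputable def Cb (μ : Measure (ℤ → 𝒳)) (D : ℝ) (Jk k : ℕ) (b : Fin k → 𝒳) : ℕ :=
  ⌊(Jk : ℝ) * (2:ℝ) ^ D / (μ (V k b 0)).toReal⌋₊

open Classical in
noncomputable def Ek (μ : Measure (ℤ → 𝒳)) (D : ℝ) (Jk k : ℕ) : Set (ℤ → 𝒳) :=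
  ⋃ b : Fin k → 𝒳, if μ (V k b 0) = 0 then V k b 0
    else V k b 0 ∩ {ω | Cb μ D Jk k b < recTime k Jk ω}

lemma meas_Ek_le (h : MeasurePreserving shift μ μ) [IsProbabilityMeasure μ]
    (D : ℝ) (Jk k : ℕ) (hJk : 0 < Jk) :
    μ (Ek μ D Jk k) ≤ ENNReal.ofReal ((2:ℝ) ^ (-D)) := by
  classical
  have hb : ∀ b : Fin k → 𝒳,
      μ (if μ (V k b 0) = 0 then V k b 0
         else V k b 0 ∩ {ω | Cb μ D Jk k b < recTime k Jk ω})
        ≤ ENNReal.ofReal ((2:ℝ) ^ (-D)) * μ (V k b 0) := by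
    intro b
    by_cases h0 : μ (V k b 0) = 0
    · rw [if_pos h0, h0]
      simp
    · rw [if_neg h0]
      set p := (μ (V k b 0)).toReal with hp
      have hppos : 0 < p := ENNReal.toReal_pos h0 (measure_ne_top μ _)
      have h2D : (0:ℝ) < (2:ℝ) ^ D := Real.rpow_pos_of_pos two_pos D
      have h2D' : (0:ℝ) < (2:ℝ) ^ (-D) := Real.rpow_pos_of_pos two_pos (-D)
      refine le_trans (meas_bad_le μ h k b Jk hJk (Cb μ D Jk k b)) ?_
      have hC1 : ((Cb μ D Jk k b : ℝ≥0∞) + 1) = ENNReal.ofReal ((Cb μ D Jk k b : ℝ) + 1) := by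
        rw [ENNReal.ofReal_add (by positivity) (by norm_num)]
        simp [ENNReal.ofReal_natCast]
      rw [ENNReal.div_le_iff (by simp) (by simp)]
      have hVp : μ (V k b 0) = ENNReal.ofReal p := (ENNReal.ofReal_toReal (measure_ne_top μ _)).symm
      rw [hVp, hC1, ← ENNReal.ofReal_mul (le_of_lt h2D'), ← ENNReal.ofReal_mul (by positivity)]
      rw [show ((Jk : ℝ≥0∞)) = ENNReal.ofReal (Jk : ℝ) from (ENNReal.ofReal_natCast Jk).symm]
      apply ENNReal.ofReal_le_ofReal
      have hx : (Jk : ℝ) * (2:ℝ) ^ D / p < (Cb μ D Jk k b : ℝ) + 1 := Nat.lt_floor_add_one _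
      have hkey : (Jk : ℝ) = (2:ℝ)^(-D) * p * ((Jk : ℝ) * (2:ℝ) ^ D / p) := by
        rw [Real.rpow_neg (by norm_num) D]
        field_simp
      rw [hkey]
      exact mul_le_mul_of_nonneg_left (le_of_lt hx) (by positivity)
  calc μ (Ek μ D Jk k) ≤ ∑ b : Fin k → 𝒳, μ (if μ (V k b 0) = 0 then V k b 0
         else V k b 0 ∩ {ω | Cb μ D Jk k b < recTime k Jk ω}) := by
        rw [Ek]
        exact measure_iUnion_fintype_le μ _
    _ ≤ ∑ b : Fin k → 𝒳, ENNReal.ofReal ((2:ℝ) ^ (-D)) * μ (V k b 0) :=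
        Finset.sum_le_sum fun b _ => hb b
    _ = ENNReal.ofReal ((2:ℝ) ^ (-D)) * ∑ b : Fin k → 𝒳, μ (V k b 0) := by
        rw [Finset.mul_sum]
    _ = ENNReal.ofReal ((2:ℝ) ^ (-D)) := by rw [sum_V_eq_one, mul_one]

end Stmt3Proof

/-- For a stationary ergodic finite-alphabet process, if `∑ₖ 2^{-Δₖ} < ∞` then almost
surely `log₂(τ^k_{J_k}/J_k) ≤ -log₂ P(X^{-k}) + Δ_k` eventually for large `k`. -/
theorem stmt_3 {𝒳 : Type*} [Fintype 𝒳] [DecidableEq 𝒳] [MeasurableSpace 𝒳]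
    [MeasurableSingletonClass 𝒳]
    (μ : Measure (ℤ → 𝒳)) [IsProbabilityMeasure μ]
    (herg : Ergodic shift μ)
    (Δ : ℕ → ℝ) (hΔ : Summable fun k => Real.rpow 2 (-Δ k))
    (J : ℕ → ℕ) (hJ : ∀ k, 0 < J k) :
    ∀ᵐ ω ∂μ, ∀ᶠ k in atTop,
      Real.logb 2 ((recTime k (J k) ω : ℝ) / (J k : ℝ))
        ≤ - Real.logb 2 (μ {ω' | pastBlk k 0 ω' = pastBlk k 0 ω}).toReal + Δ k := by
  classical
  have hmp : MeasurePreserving shift μ μ := herg.toMeasurePreserving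
  have hsum : ∑' n : ℕ, μ (Stmt3Proof.Ek μ (Δ n) (J n) n) ≠ ⊤ := by
    have hle : ∀ n, μ (Stmt3Proof.Ek μ (Δ n) (J n) n) ≤ ENNReal.ofReal ((2:ℝ) ^ (-Δ n)) :=
      fun n => Stmt3Proof.meas_Ek_le μ hmp (Δ n) (J n) n (hJ n)
    refine ne_top_of_le_ne_top ?_ (ENNReal.tsum_le_tsum hle)
    rw [← ENNReal.ofReal_tsum_of_nonneg
      (fun n => le_of_lt (Real.rpow_pos_of_pos two_pos _)) hΔ]
    exact ENNReal.ofReal_ne_top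
  have hae := MeasureTheory.ae_eventually_notMem hsum
  have hΔ0 : ∀ᶠ n in atTop, 0 ≤ Δ n := by
    have ht := hΔ.tendsto_atTop_zero
    filter_upwards [ht.eventually_lt_const (by norm_num : (0:ℝ) < 1)] with n hn
    by_contra hneg
    push_neg at hneg
    have h1 : (1:ℝ) < (2:ℝ) ^ (-Δ n) :=
      (Real.one_lt_rpow_iff_of_pos two_pos).mpr (Or.inl ⟨one_lt_two, by linarith⟩)
    have h2 : (2:ℝ) ^ (-Δ n) < 1 := hn
    linarith
  filter_upwards [hae] with ω hω
  filter_upwards [hω, hΔ0] with k hk hk0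
  set b := pastBlk k 0 ω with hbdef
  have hbmem : ω ∈ Stmt3Proof.V k b 0 := rfl
  have hnot : ω ∉ (if μ (Stmt3Proof.V k b 0) = 0 then Stmt3Proof.V k b 0
      else Stmt3Proof.V k b 0 ∩
        {ω' | Stmt3Proof.Cb μ (Δ k) (J k) k b < recTime k (J k) ω'}) := by
    intro hmem
    exact hk (show ω ∈ Stmt3Proof.Ek μ (Δ k) (J k) k from Set.mem_iUnion.mpr ⟨b, hmem⟩)
  by_cases h0 : μ (Stmt3Proof.V k b 0) = 0
  · rw [if_pos h0] at hnot
    exact absurd hbmem hnot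
  · rw [if_neg h0] at hnot
    have hrec : recTime k (J k) ω ≤ Stmt3Proof.Cb μ (Δ k) (J k) k b := by
      by_contra hgt
      push_neg at hgt
      exact hnot ⟨hbmem, hgt⟩
    set p := (μ (Stmt3Proof.V k b 0)).toReal with hpdef
    have hp0 : 0 < p := ENNReal.toReal_pos h0 (measure_ne_top μ _)
    have hp1 : p ≤ 1 := by
      have h1 : μ (Stmt3Proof.V k b 0) ≤ 1 := prob_le_one
      simpa [hpdef] using ENNReal.toReal_mono (by norm_num) h1
    have h2D : (0:ℝ) < (2:ℝ) ^ (Δ k) := Real.rpow_pos_of_pos two_pos _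
    have hJpos : (0:ℝ) < (J k : ℝ) := by exact_mod_cast hJ k
    show Real.logb 2 ((recTime k (J k) ω : ℝ) / (J k : ℝ)) ≤
      - Real.logb 2 (μ (Stmt3Proof.V k b 0)).toReal + Δ k
    rw [← hpdef]
    have hτle : (recTime k (J k) ω : ℝ) ≤ (J k : ℝ) * (2:ℝ) ^ (Δ k) / p := by
      calc (recTime k (J k) ω : ℝ) ≤ (Stmt3Proof.Cb μ (Δ k) (J k) k b : ℝ) := by
            exact_mod_cast hrec
        _ ≤ (J k : ℝ) * (2:ℝ) ^ (Δ k) / p := by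
            rw [hpdef]
            exact Nat.floor_le (by positivity)
    rcases Nat.eq_zero_or_pos (recTime k (J k) ω) with hτ | hτ
    · rw [hτ]
      simp only [Nat.cast_zero, zero_div, Real.logb_zero]
      have hlogp : Real.logb 2 p ≤ 0 := Real.logb_nonpos one_lt_two (le_of_lt hp0) hp1
      linarith
    · have hτpos : (0:ℝ) < (recTime k (J k) ω : ℝ) / (J k : ℝ) :=
        div_pos (by exact_mod_cast hτ) hJpos
      have hfinal : (recTime k (J k) ω : ℝ) / (J k : ℝ) ≤ (2:ℝ) ^ (Δ k) / p := by
        have h1 : (recTime k (J k) ω : ℝ) / (J k : ℝ)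
            ≤ ((J k : ℝ) * (2:ℝ) ^ (Δ k) / p) / (J k : ℝ) := by gcongr
        have h2 : ((J k : ℝ) * (2:ℝ) ^ (Δ k) / p) / (J k : ℝ) = (2:ℝ) ^ (Δ k) / p := by
          field_simp
        rw [h2] at h1
        exact h1
      calc Real.logb 2 ((recTime k (J k) ω : ℝ) / (J k : ℝ))
          ≤ Real.logb 2 ((2:ℝ) ^ (Δ k) / p) :=
            (Real.logb_le_logb one_lt_two hτpos (by positivity)).mpr hfinal
        _ = Δ k - Real.logb 2 p := by
            rw [Real.logb_div (ne_of_gt h2D) (ne_of_gt hp0),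
              Real.logb_rpow two_pos (by norm_num)]
        _ = - Real.logb 2 p + Δ k := by ring
end

section
/- Let $P$ and $Q$ be probability measures with $P \ll Q$, natural-log divergence $I(P|Q) = E_P[\ln(dP/dQ)]$. Then $I(P|Q) \le E_P|\ln(dP/dQ)| \le I(P|Q) + \sqrt{2 I(P|Q)}$. -/
open MeasureTheory Real Set InformationTheory

/-! With `L = log (dP/dQ)` and `s = {L < 0}` one has `E_P|L| = I - 2 ∫_s L dP`. Integrating
`-L ≤ e^{-L} - 1` over `s` gives `-∫_s L dP ≤ Q(s) - P(s)`, while the log-sum inequality on the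
two cells `s`, `sᶜ` followed by the binary Pinsker inequality `kl(p, q) ≥ 2 (q - p)²` gives
`2 (Q(s) - P(s))² ≤ I`, that is `2 (Q(s) - P(s)) ≤ √(2 I)`. -/

lemma two_mul_sq_sub_le_binary_kl {p q : ℝ} (hp : 0 ≤ p) (hpq : p ≤ q) (hq : q < 1) :
    2 * (q - p) ^ 2 ≤ p * log (p / q) + (1 - p) * log ((1 - p) / (1 - q)) := by
  set G : ℝ → ℝ := fun t ↦ -(p * log t) - (1 - p) * log (1 - t) - 2 * (t - p) ^ 2 with hG
  have hlog : ContinuousOn (fun t ↦ p * log t) (Icc p q) := by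
    rcases hp.eq_or_lt with rfl | hp
    · simpa using continuousOn_const
    · exact continuousOn_const.mul <| continuousOn_log.mono fun t ht ↦ (hp.trans_le ht.1).ne'
  have hlog' : ContinuousOn (fun t ↦ log (1 - t)) (Icc p q) :=
    ContinuousOn.log (by fun_prop) fun t ht ↦ by linarith [ht.2]
  -- `G' t = -p/t + (1-p)/(1-t) - 4(t-p) = (t-p)/(t(1-t)) - 4(t-p)`, and `1 - 4t(1-t) = (1-2t)²`.
  have hmono : MonotoneOn G (Icc p q) := by
    refine monotoneOn_of_hasDerivWithinAt_nonneg (convex_Icc p q)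
      (f' := fun t ↦ (t - p) * (1 - 2 * t) ^ 2 / (t * (1 - t)))
      (hlog.neg.sub (continuousOn_const.mul hlog') |>.sub (by fun_prop))
      (fun t ht ↦ ?_) fun t ht ↦ ?_
    all_goals
      rw [interior_Icc] at ht
      have ht0 : 0 < t := hp.trans_lt ht.1
      have ht1 : 0 < 1 - t := by linarith [ht.2]
    · have h := (((hasDerivAt_log ht0.ne').const_mul p).neg.sub
        (((hasDerivAt_id' t).const_sub 1).log ht1.ne' |>.const_mul (1 - p))).sub
        (((hasDerivAt_id' t).sub_const p).pow 2 |>.const_mul 2)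
      refine (h.congr_deriv ?_).hasDerivWithinAt
      field_simp
      ring
    · have : 0 ≤ t - p := by linarith [ht.1]
      positivity
  have hG_mono := hmono ⟨le_rfl, hpq⟩ ⟨hpq, le_rfl⟩ hpq
  have hsplit : p * log (p / q) = p * log p - p * log q := by
    rcases hp.eq_or_lt with rfl | hp
    · simp
    · rw [log_div hp.ne' (hp.trans_le hpq).ne', mul_sub]
  rw [hsplit, log_div (by linarith) (by linarith)]
  simp only [hG, sub_self] at hG_mono
  nlinarith [hG_mono]

section Measure

variable {α : Type*} [MeasurableSpace α]

lemma integral_abs_eq_integral_sub_two_mul_setIntegral_neg {μ : Measure α} {g : α → ℝ}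
    (hg : Integrable g μ) (hs : MeasurableSet {x | g x < 0}) :
    ∫ x, |g x| ∂μ = ∫ x, g x ∂μ - 2 * ∫ x in {x | g x < 0}, g x ∂μ := by
  rw [← integral_add_compl hs hg, ← integral_add_compl hs hg.abs,
    setIntegral_congr_fun hs fun x hx ↦ abs_of_neg hx,
    setIntegral_congr_fun hs.compl fun x hx ↦ abs_of_nonneg (not_lt.1 (show ¬g x < 0 from hx)),
    integral_neg]
  ring

section FiniteMeasure

variable {μ ν : Measure α} [IsFiniteMeasure μ] [IsFiniteMeasure ν]

lemma integrable_inv_rnDeriv (hμν : μ ≪ ν) :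
    Integrable (fun x ↦ (μ.rnDeriv ν x).toReal⁻¹) μ := by
  refine (integrable_rnDeriv_smul_iff hμν).1 <| Integrable.mono' (integrable_const 1)
    (by fun_prop) (.of_forall fun x ↦ ?_)
  rw [Real.norm_of_nonneg (by positivity)]
  exact mul_inv_le_one

lemma setIntegral_inv_rnDeriv_le (hμν : μ ≪ ν) {s : Set α} (hs : MeasurableSet s) :
    ∫ x in s, (μ.rnDeriv ν x).toReal⁻¹ ∂μ ≤ ν.real s := by
  rw [← setIntegral_rnDeriv_smul hμν hs]
  calc ∫ x in s, (μ.rnDeriv ν x).toReal • (μ.rnDeriv ν x).toReal⁻¹ ∂ν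
      ≤ ∫ _ in s, (1 : ℝ) ∂ν :=
        setIntegral_mono
          ((integrable_rnDeriv_smul_iff hμν).2 (integrable_inv_rnDeriv hμν)).integrableOn
          (integrable_const 1).integrableOn fun _ ↦ mul_inv_le_one
    _ = ν.real s := by simp

/-- Integrating the tangent-line bound `log c + 1 - c / f ≤ log f` of the concave logarithm. -/
lemma log_add_one_mul_sub_le_setIntegral_llr (hμν : μ ≪ ν) (h_int : Integrable (llr μ ν) μ)
    {s : Set α} (hs : MeasurableSet s) {c : ℝ} (hc : 0 < c) :
    (log c + 1) * μ.real s - c * ν.real s ≤ ∫ x in s, llr μ ν x ∂μ := by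
  have h_tangent :
      ∀ᵐ x ∂μ.restrict s, log c + 1 - c * (μ.rnDeriv ν x).toReal⁻¹ ≤ llr μ ν x := by
    filter_upwards [ae_restrict_of_ae (Measure.rnDeriv_pos hμν),
      ae_restrict_of_ae (hμν.ae_le (Measure.rnDeriv_lt_top μ ν))] with x h_pos h_lt_top
    have hx := ENNReal.toReal_pos h_pos.ne' h_lt_top.ne
    have := log_le_sub_one_of_pos (mul_pos hc (inv_pos.2 hx))
    rw [log_mul hc.ne' (inv_pos.2 hx).ne', log_inv] at this
    rw [llr]
    linarith
  have h_inv := integrable_inv_rnDeriv hμν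
  calc (log c + 1) * μ.real s - c * ν.real s
      ≤ (log c + 1) * μ.real s - c * ∫ x in s, (μ.rnDeriv ν x).toReal⁻¹ ∂μ := by
        gcongr
        exact setIntegral_inv_rnDeriv_le hμν hs
    _ = ∫ x in s, (log c + 1 - c * (μ.rnDeriv ν x).toReal⁻¹) ∂μ := by
        rw [integral_sub (integrable_const _) (h_inv.const_mul c).integrableOn,
          integral_const_mul, setIntegral_const, smul_eq_mul, mul_comm]
    _ ≤ ∫ x in s, llr μ ν x ∂μ :=
        integral_mono_ae ((integrable_const _).sub (h_inv.const_mul c)).integrableOn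
          h_int.integrableOn h_tangent

lemma mul_log_div_le_setIntegral_llr (hμν : μ ≪ ν) (h_int : Integrable (llr μ ν) μ)
    {s : Set α} (hs : MeasurableSet s) :
    μ.real s * log (μ.real s / ν.real s) ≤ ∫ x in s, llr μ ν x ∂μ := by
  rcases (measureReal_nonneg (μ := μ) (s := s)).eq_or_lt with hμs | hμs
  · rw [← hμs, zero_mul, Measure.restrict_eq_zero.2 ((measureReal_eq_zero_iff).1 hμs.symm),
      integral_zero_measure]
  have hνs : 0 < ν.real s := by
    refine measureReal_nonneg.lt_of_ne' <| (measureReal_ne_zero_iff).2 fun hν ↦ ?_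
    exact (measureReal_ne_zero_iff).1 hμs.ne' (hμν hν)
  have h := log_add_one_mul_sub_le_setIntegral_llr hμν h_int hs (div_pos hμs hνs)
  rwa [div_mul_cancel₀ _ hνs.ne', add_one_mul, add_sub_cancel_right, mul_comm] at h

end FiniteMeasure

lemma two_mul_sq_sub_measureReal_le_integral_llr {μ ν : Measure α} [IsProbabilityMeasure μ]
    [IsProbabilityMeasure ν] (hμν : μ ≪ ν) (h_int : Integrable (llr μ ν) μ) {s : Set α}
    (hs : MeasurableSet s) (hle : μ.real s ≤ ν.real s) :
    2 * (ν.real s - μ.real s) ^ 2 ≤ ∫ x, llr μ ν x ∂μ := by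
  rcases hle.eq_or_lt with heq | hlt
  · simpa [heq] using integral_llr_add_sub_measure_univ_nonneg hμν h_int
  have hν_compl : 0 < ν.real sᶜ := by
    have hμ_compl : 0 < μ.real sᶜ := by
      rw [probReal_compl_eq_one_sub hs]
      linarith [measureReal_le_one (μ := ν) (s := s)]
    refine measureReal_nonneg.lt_of_ne' <| (measureReal_ne_zero_iff).2 fun hν ↦ ?_
    exact (measureReal_ne_zero_iff).1 hμ_compl.ne' (hμν hν)
  rw [probReal_compl_eq_one_sub hs] at hν_compl
  have h_binary := two_mul_sq_sub_le_binary_kl measureReal_nonneg hlt.le (sub_pos.1 hν_compl)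
  have h_s := mul_log_div_le_setIntegral_llr hμν h_int hs
  have h_compl := mul_log_div_le_setIntegral_llr hμν h_int hs.compl
  rw [probReal_compl_eq_one_sub hs, probReal_compl_eq_one_sub hs] at h_compl
  linarith [integral_add_compl hs h_int]

end Measure

/-- Pinsker's two-sided inequality with Barron's constant `Γ = √2` (natural logs):
if `P ≪ Q` and `I(P|Q) = ∫ log(dP/dQ) dP` is finite, then
`I(P|Q) ≤ ∫ |log(dP/dQ)| dP ≤ I(P|Q) + √(2 I(P|Q))`. -/
theorem stmt_7 {α : Type*} [MeasurableSpace α]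
    (P Q : Measure α) [IsProbabilityMeasure P] [IsProbabilityMeasure Q]
    (hac : P ≪ Q)
    (hInt : Integrable (fun x => Real.log (P.rnDeriv Q x).toReal) P) :
    (∫ x, Real.log (P.rnDeriv Q x).toReal ∂P)
        ≤ ∫ x, |Real.log (P.rnDeriv Q x).toReal| ∂P ∧
    (∫ x, |Real.log (P.rnDeriv Q x).toReal| ∂P)
        ≤ (∫ x, Real.log (P.rnDeriv Q x).toReal ∂P) +
            Real.sqrt (2 * ∫ x, Real.log (P.rnDeriv Q x).toReal ∂P) := by
  refine ⟨integral_mono hInt hInt.abs fun x ↦ le_abs_self _, ?_⟩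
  change (∫ x, |llr P Q x| ∂P) ≤ (∫ x, llr P Q x ∂P) + √(2 * ∫ x, llr P Q x ∂P)
  replace hInt : Integrable (llr P Q) P := hInt
  set s := {x | llr P Q x < 0}
  have hs : MeasurableSet s := measurableSet_lt (measurable_llr P Q) measurable_const
  rw [integral_abs_eq_integral_sub_two_mul_setIntegral_neg hInt hs]
  have h_neg : P.real s - Q.real s ≤ ∫ x in s, llr P Q x ∂P := by
    simpa using log_add_one_mul_sub_le_setIntegral_llr hac hInt hs one_pos
  rcases le_or_gt (Q.real s) (P.real s) with hle | hlt
  · linarith [sqrt_nonneg (2 * ∫ x, llr P Q x ∂P)]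
  have h_pinsker := two_mul_sq_sub_measureReal_le_integral_llr hac hInt hs hlt.le
  have h_sqrt : 2 * (Q.real s - P.real s) ≤ √(2 * ∫ x, llr P Q x ∂P) :=
    (le_abs_self _).trans (abs_le_sqrt (by linarith))
  linarith
end
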